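/- arXiv:2204.11653 — 2 statements merged into one kernel-verified Lean document; each statement's English description precedes it below -/
import Mathlib

section
/- Let F be a field, let m, c, k be positive integers, let M be an m × c matrix over F, let c₀ be a column index, and let α : Fin k → F be injective with α(j) ≠ 0 for all j. Suppose p_1, …, p_c are polynomials over F, each of degree strictly less than k, such that p_l(0) = 1 if l = c₀ and p_l(0) = 0 otherwise. For each j define the share vector s_j := (p_1(α(j)), …, p_c(α(j))) ∈ F^c and the answer a_j := M · s_j ∈ F^m. Then ∑_{j=0}^{k−1} (∏_{i ≠ j} α(i)/(α(i) − α(j))) · a_j equals the c₀-th column of M, i.e. the vector (M(r, c₀))_{r}. -/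
/-!
Each coordinate of the Lagrange combination is linear in the shares, so it commutes with the
database matrix. Coordinatewise, the shares of the `l`-th entry are the values of `p l` at the
`k` nodes; since `p l` has degree `< k`, Lagrange interpolation at `0` recovers `p l (0)`. Hence
the combined query is the basis vector `e_{c₀}`, and `M e_{c₀}` is the `c₀`-th column of `M`.
-/

open Polynomial Finset

namespace Lagrange

variable {F ι : Type*} [Field F] [DecidableEq ι] {s : Finset ι} {v : ι → F}

theorem eval_basis (s : Finset ι) (v : ι → F) (i : ι) (x : F) :
    (Lagrange.basis s v i).eval x = ∏ j ∈ s.erase i, (x - v j) / (v i - v j) := by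
  rw [Lagrange.basis, eval_prod]
  refine prod_congr rfl fun j _ => ?_
  rw [basisDivisor, eval_mul, eval_C, eval_sub, eval_X, eval_C, div_eq_inv_mul]

theorem eval_eq_sum_prod_div_mul_eval {f : F[X]} (hvs : Set.InjOn v s) (hf : f.degree < #s)
    (x : F) :
    f.eval x = ∑ i ∈ s, (∏ j ∈ s.erase i, (x - v j) / (v i - v j)) * f.eval (v i) := by
  conv_lhs => rw [eq_interpolate hvs hf, interpolate_apply, eval_finsetSum]
  refine sum_congr rfl fun i _ => ?_
  rw [eval_mul, eval_C, eval_basis, mul_comm]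

theorem eval_zero_eq_sum_prod_div_mul_eval {f : F[X]} (hvs : Set.InjOn v s)
    (hf : f.degree < #s) :
    f.eval 0 = ∑ i ∈ s, (∏ j ∈ s.erase i, v j / (v j - v i)) * f.eval (v i) := by
  simp only [eval_eq_sum_prod_div_mul_eval hvs hf 0, zero_sub, neg_div, ← div_neg, neg_sub]

end Lagrange

theorem shamir_pir_correctness_general {F : Type*} [Field F]
    (m c k : ℕ)
    (M : Matrix (Fin m) (Fin c) F) (c₀ : Fin c)
    (α : Fin k → F) (hinj : Function.Injective α)
    (p : Fin c → Polynomial F) (hdeg : ∀ l, (p l).degree < (k : ℕ))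
    (hconst : ∀ l, (p l).eval 0 = if l = c₀ then 1 else 0)
    (s : Fin k → Fin c → F) (hs : ∀ j l, s j l = (p l).eval (α j))
    (a : Fin k → Fin m → F) (ha : ∀ j, a j = M.mulVec (s j)) :
    (∑ j : Fin k,
        (∏ i ∈ Finset.univ.erase j, α i / (α i - α j)) • a j) =
      fun r : Fin m => M r c₀ := by
  have hquery : ∑ j, (∏ i ∈ univ.erase j, α i / (α i - α j)) • s j = Pi.single c₀ 1 := by
    funext l
    have hl := Lagrange.eval_zero_eq_sum_prod_div_mul_eval (s := univ) hinj.injOn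
      (by simpa using hdeg l)
    simp only [Finset.sum_apply, Pi.smul_apply, smul_eq_mul, hs, ← hl, hconst, Pi.single_apply]
  calc ∑ j, (∏ i ∈ univ.erase j, α i / (α i - α j)) • a j
      = M.mulVec (∑ j, (∏ i ∈ univ.erase j, α i / (α i - α j)) • s j) := by
        simp only [ha, Matrix.mulVec_sum, Matrix.mulVec_smul]
    _ = fun r => M r c₀ := by rw [hquery, Matrix.mulVec_single_one]; rfl

/-- Correctness of the Shamir-secret-sharing PIR protocol: with database
`M : Matrix (Fin m) (Fin c) F`, desired column `c₀`, injective nonzero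
evaluation points `α : Fin k → F`, and secret-sharing polynomials
`p l` of degree `< k` with `p l (0) = 1` iff `l = c₀` (and `0` otherwise),
the Lagrange combination at `0` of the answers `a j = M · s j`,
where `s j = (p l (α j))_l`, recovers the `c₀`-th column of `M`. -/
theorem shamir_pir_correctness {F : Type*} [Field F]
    (m c k : ℕ) (hm : 1 ≤ m) (hc : 1 ≤ c) (hk : 1 ≤ k)
    (M : Matrix (Fin m) (Fin c) F) (c₀ : Fin c)
    (α : Fin k → F) (hinj : Function.Injective α) (hα : ∀ j, α j ≠ 0)
    (p : Fin c → Polynomial F) (hdeg : ∀ l, (p l).degree < (k : ℕ))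
    (hconst : ∀ l, (p l).eval 0 = if l = c₀ then 1 else 0)
    (s : Fin k → Fin c → F) (hs : ∀ j l, s j l = (p l).eval (α j))
    (a : Fin k → Fin m → F) (ha : ∀ j, a j = M.mulVec (s j)) :
    (∑ j : Fin k,
        (∏ i ∈ Finset.univ.erase j, α i / (α i - α j)) • a j) =
      fun r : Fin m => M r c₀ :=
  shamir_pir_correctness_general m c k M c₀ α hinj p hdeg hconst s hs a ha
end

section
/- Let F be a finite field, let k ≥ 1 and t ≥ 1, let α : Fin k → F be injective with α(j) ≠ 0 for all j, let S be a subset of Fin k with |S| ≤ t, and let s ∈ F. If the coefficient vector (c_1, …, c_t) is drawn uniformly at random from F^t and p(X) = s + c_1·X + ⋯ + c_t·X^t, then the tuple of shares (p(α(j)))_{j ∈ S} is uniformly distributed on F^S; that is, the pushforward of the uniform distribution on F^t under the map (c_1, …, c_t) ↦ (p(α(j)))_{j ∈ S} is the uniform distribution on the functions from S to F. -/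
/-!
The share map `c ↦ (s + ∑ i, c i * α j ^ (i + 1))_j` is a translate of a linear map `F^t → F^S`.
That linear map is surjective: Lagrange interpolation at the `|S| ≤ t` distinct points `α j`
of the values `r j / α j` gives a polynomial of degree `< t`, and multiplying it by `X` yields
the prescribed shares `r`. A surjective homomorphism of finite groups has fibres of equal size
(cosets of its kernel), so it, and any translate of it, maps the uniform distribution to the
uniform distribution.
-/

open Finset Polynomial
open scoped ENNReal

namespace PMF

theorem map_uniformOfFintype_of_card_fiber_eq {α β : Type*} [Fintype α] [Nonempty α]
    [Fintype β] [Nonempty β] [DecidableEq β] (f : α → β) {n : ℕ}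
    (hfib : ∀ b, #{a | f a = b} = n) :
    map f (uniformOfFintype α) = uniformOfFintype β := by
  have hcard : Fintype.card α = Fintype.card β * n := by
    simpa [hfib, mul_comm] using card_eq_sum_card_fiberwise (f := f) (s := univ) (t := univ)
      (fun _ _ => mem_univ _)
  have hn : (n : ℝ≥0∞) ≠ 0 := by
    have := Fintype.card_ne_zero (α := α)
    rw [hcard] at this
    exact_mod_cast right_ne_zero_of_mul this
  ext b
  calc map f (uniformOfFintype α) b
      = ∑ a ∈ {a | f a = b}, ((Fintype.card α : ℝ≥0∞))⁻¹ := by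
        simp only [map_apply, tsum_fintype, uniformOfFintype_apply, sum_filter, eq_comm]
    _ = n * ((Fintype.card β : ℝ≥0∞) * n)⁻¹ := by
        rw [sum_const, nsmul_eq_mul, hfib, hcard, Nat.cast_mul]
    _ = uniformOfFintype β b := by
        rw [uniformOfFintype_apply, ENNReal.mul_inv (by simp) (by simp), mul_left_comm,
          ENNReal.mul_inv_cancel hn (by simp), mul_one]

theorem map_uniformOfFintype_const_add_of_surjective {G H : Type*} [AddGroup G] [Fintype G]
    [AddGroup H] [Fintype H] (f : G →+ H) (hf : Function.Surjective f) (c : H) :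
    map (fun g => c + f g) (uniformOfFintype G) = uniformOfFintype H := by
  classical
  refine map_uniformOfFintype_of_card_fiber_eq _ (n := #{g | f g = 0}) fun b => ?_
  simp only [← eq_neg_add_iff_add_eq (b := c)]
  exact AddMonoidHom.card_fiber_eq_of_mem_range f (hf _) (hf _)

end PMF

section Interpolation

variable {F ι : Type*} [Field F] [Fintype ι] {α : ι → F}

theorem exists_coeffs_sum_mul_pow_eq (hinj : Function.Injective α) {t : ℕ}
    (ht : Fintype.card ι ≤ t) (r : ι → F) :
    ∃ c : Fin t → F, ∀ j, ∑ i : Fin t, c i * α j ^ (i : ℕ) = r j := by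
  classical
  set q := Lagrange.interpolate univ α r
  have hq : q ∈ degreeLT F t := mem_degreeLT.2 <|
    (Lagrange.degree_interpolate_lt r hinj.injOn).trans_le (by simpa using ht)
  refine ⟨degreeLTEquiv F t ⟨q, hq⟩, fun j => ?_⟩
  rw [← eval_eq_sum_degreeLTEquiv hq, Lagrange.eval_interpolate_at_node r hinj.injOn (mem_univ j)]

theorem exists_coeffs_sum_mul_pow_succ_eq (hinj : Function.Injective α) (hα : ∀ j, α j ≠ 0)
    {t : ℕ} (ht : Fintype.card ι ≤ t) (r : ι → F) :
    ∃ c : Fin t → F, ∀ j, ∑ i : Fin t, c i * α j ^ ((i : ℕ) + 1) = r j := by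
  obtain ⟨c, hc⟩ := exists_coeffs_sum_mul_pow_eq hinj ht fun j => r j / α j
  refine ⟨c, fun j => ?_⟩
  simp_rw [pow_succ, ← mul_assoc, ← sum_mul, hc, div_mul_cancel₀ _ (hα j)]

end Interpolation

theorem shamir_shares_uniform_general {F : Type*} [Field F] [Fintype F]
    (k t : ℕ)
    (α : Fin k → F) (hinj : Function.Injective α) (hα : ∀ j, α j ≠ 0)
    (S : Finset (Fin k)) (hS : S.card ≤ t) (s : F) :
    PMF.map
      (fun cf : Fin t → F =>
        fun j : {x : Fin k // x ∈ S} => s + ∑ i : Fin t, cf i * (α j) ^ ((i : ℕ) + 1))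
      (PMF.uniformOfFintype (Fin t → F)) =
    PMF.uniformOfFintype ({x : Fin k // x ∈ S} → F) := by
  set L := (Matrix.vecMulLinear (Matrix.of fun (i : Fin t) (j : {x // x ∈ S}) =>
    α j ^ ((i : ℕ) + 1))).toAddMonoidHom
  -- `L c j` unfolds to `∑ i, c i * α j ^ (i + 1)`, so the share map is `c ↦ (fun _ => s) + L c`.
  have hL : Function.Surjective L := fun r => by
    obtain ⟨c, hc⟩ := exists_coeffs_sum_mul_pow_succ_eq (hinj.comp Subtype.val_injective)
      (fun j => hα j.1) (by simpa using hS) r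
    exact ⟨c, funext hc⟩
  exact PMF.map_uniformOfFintype_const_add_of_surjective L hL (fun _ => s)

/-- `t`-privacy of Shamir secret sharing, distributionally: over a finite
field `F`, with injective nonzero evaluation points `α : Fin k → F`, a
coalition `S ⊆ Fin k` with `|S| ≤ t`, and a fixed secret `s`, the pushforward
of the uniform distribution on coefficient vectors `F^t` under the map
`(c 1, …, c t) ↦ (p (α j))_{j ∈ S}` (where `p X = s + c 1·X + ⋯ + c t·X^t`)
is the uniform distribution on functions `S → F`. -/
theorem shamir_shares_uniform {F : Type*} [Field F] [Fintype F] [DecidableEq F]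
    (k t : ℕ) (hk : 1 ≤ k) (ht : 1 ≤ t)
    (α : Fin k → F) (hinj : Function.Injective α) (hα : ∀ j, α j ≠ 0)
    (S : Finset (Fin k)) (hS : S.card ≤ t) (s : F) :
    PMF.map
      (fun cf : Fin t → F =>
        fun j : {x : Fin k // x ∈ S} => s + ∑ i : Fin t, cf i * (α j) ^ ((i : ℕ) + 1))
      (PMF.uniformOfFintype (Fin t → F)) =
    PMF.uniformOfFintype ({x : Fin k // x ∈ S} → F) :=
  shamir_shares_uniform_general k t α hinj hα S hS s
end
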